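/- Let q, p, q', p' be positive integers with q ≥ 2 and q' ≥ 2. Let U ⊆ Ω_{q,p} be an open subset and let g = (g₁,g₂) : U → Ω_{q',p'} be a holomorphic map (g₁ with values in M(1,q';ℂ), g₂ in M(1,p';ℂ)) that is fibral-image-preserving: for every Z ∈ D^I_{q,p} with S_Z := {(A,B) ∈ U : A·Z = B} nonempty, there exists W ∈ D^I_{q',p'} such that g₁(A,B)·W = g₂(A,B) for all (A,B) ∈ S_Z. Suppose there exists Z₀ ∈ D^I_{q,p} with S_{Z₀} ≠ ∅ for which such W is unique, i.e. exactly one W₀ ∈ D^I_{q',p'} satisfies g₁(A,B)·W₀ = g₂(A,B) for all (A,B) ∈ S_{Z₀}. Then there exist an open neighborhood U_{Z₀} of Z₀ in D^I_{q,p} and a holomorphic map F : U_{Z₀} → D^I_{q',p'} such that for every Z ∈ U_{Z₀}, F(Z) is the unique element W of D^I_{q',p'} satisfying g₁(A,B)·W = g₂(A,B) for all (A,B) ∈ S_Z. -/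

import Mathlib

open Matrix
open scoped ComplexOrder

attribute [local instance] Matrix.normedAddCommGroup Matrix.normedSpace

/-- The type-I irreducible bounded symmetric domain `D^I_{m,n}`,
realized as the set of complex `m × n` matrices `Z` with `I - Zᴴ Z` positive definite. -/
def typeIDomain (m n : ℕ) : Set (Matrix (Fin m) (Fin n) ℂ) :=
  {Z | (1 - Zᴴ * Z).PosDef}

/-- `f` maps `D` into `D'` and the `f`-preimage of every compact subset of `D'`
is a compact subset of `D`. -/
def ProperOn {E F : Type*} [TopologicalSpace E] [TopologicalSpace F]
    (f : E → F) (D : Set E) (D' : Set F) : Prop :=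
  Set.MapsTo f D D' ∧ ∀ K : Set F, K ⊆ D' → IsCompact K → IsCompact (D ∩ f ⁻¹' K)

/-- The affine cone over the generalized ball `D_{r,s} ⊂ ℙ^{r+s-1}`:
pairs of row vectors `(A,B)` with `‖A‖ > ‖B‖`. -/
def genBallCone (r s : ℕ) : Set ((Fin r → ℂ) × (Fin s → ℂ)) :=
  {x | ∑ j, ‖x.2 j‖ ^ 2 < ∑ i, ‖x.1 i‖ ^ 2}

/-! If `W₀` is the only solution in the open set `D^I_{q',p'}` of the linear system
`g₁(x) W = g₂(x)`, `x ∈ S_{Z₀}`, then the rows `g₁(x)` span `ℂ^{q'}`: otherwise `W₀` could be moved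
along a nonzero matrix that all of them annihilate. So there are `x₁, …, x_{q'} ∈ S_{Z₀}` with
`g₁(xᵢ)` linearly independent. Writing `xᵢ = (Aᵢ, Aᵢ Z₀)`, the points `(Aᵢ, Aᵢ Z)` lie in `S_Z`, and
near `Z₀` the matrix `G₁(Z)` with rows `g₁(Aᵢ, Aᵢ Z)` stays invertible. Every solution over `S_Z`
satisfies `G₁(Z) W = G₂(Z)`, so `F(Z) = G₁(Z)⁻¹ G₂(Z)` is holomorphic and is the only candidate,
while the fibral-image-preserving property provides a solution in `D^I_{q',p'}`. -/

open Filter Topology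

section PosDef

variable {𝕜 n : Type*} [RCLike 𝕜] [Fintype n]

theorem Matrix.IsHermitian.posDef_of_forall_mem_sphere {M : Matrix n n 𝕜} (hM : M.IsHermitian)
    (h : ∀ x ∈ Metric.sphere (0 : n → 𝕜) 1, 0 < RCLike.re (star x ⬝ᵥ M *ᵥ x)) : M.PosDef := by
  refine .of_dotProduct_mulVec_pos hM fun x hx => RCLike.pos_iff.mpr
    ⟨?_, hM.im_star_dotProduct_mulVec_self x⟩
  have hx' : 0 < ‖x‖ := norm_pos_iff.mpr hx
  set u : n → 𝕜 := ((‖x‖⁻¹ : ℝ) : 𝕜) • x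
  have hu : u ∈ Metric.sphere (0 : n → 𝕜) 1 := by
    simp [u, norm_smul, hx'.ne']
  have hxu : x = ((‖x‖ : ℝ) : 𝕜) • u := by
    simp [u, smul_smul, hx'.ne']
  have hscale : star x ⬝ᵥ M *ᵥ x = ((‖x‖ ^ 2 : ℝ) : 𝕜) * (star u ⬝ᵥ M *ᵥ u) := by
    conv_lhs => rw [hxu]
    rw [star_smul, mulVec_smul, smul_dotProduct, dotProduct_smul, smul_smul, smul_eq_mul,
      RCLike.star_def, RCLike.conj_ofReal, ← RCLike.ofReal_mul, ← sq]
  rw [hscale, RCLike.re_ofReal_mul]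
  exact mul_pos (by positivity) (h u hu)

theorem isOpen_setOf_posDef {X : Type*} [TopologicalSpace X] {M : X → Matrix n n 𝕜}
    (hM : Continuous M) (hH : ∀ x, (M x).IsHermitian) : IsOpen {x | (M x).PosDef} := by
  refine isOpen_iff_eventually.mpr fun x₀ hx₀ => ?_
  have hcont : Continuous fun z : X × (n → 𝕜) => RCLike.re (star z.2 ⬝ᵥ M z.1 *ᵥ z.2) := by
    fun_prop
  have hnear : ∀ᶠ x in 𝓝 x₀, ∀ y ∈ Metric.sphere (0 : n → 𝕜) 1,
      0 < RCLike.re (star y ⬝ᵥ M x *ᵥ y) :=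
    (isCompact_sphere 0 1).eventually_forall_of_forall_eventually fun y hy =>
      continuousAt_const.eventually_lt hcont.continuousAt
        (hx₀.re_dotProduct_pos (ne_zero_of_mem_unit_sphere ⟨y, hy⟩))
  exact hnear.mono fun x hx => (hH x).posDef_of_forall_mem_sphere hx

end PosDef

theorem isOpen_typeIDomain (m n : ℕ) : IsOpen (typeIDomain m n) :=
  isOpen_setOf_posDef (by fun_prop) fun Z =>
    isHermitian_one.sub (isHermitian_conjTranspose_mul_self Z)

section MatrixDifferentiable

variable {𝕜 E m n o : Type*} [NontriviallyNormedField 𝕜] [NormedAddCommGroup E] [NormedSpace 𝕜 E]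
  {s : Set E}

theorem DifferentiableOn.matrix_mul [Fintype n] [Fintype o] {A : E → Matrix m n 𝕜}
    {B : E → Matrix n o 𝕜} (hA : DifferentiableOn 𝕜 A s) (hB : DifferentiableOn 𝕜 B s) :
    DifferentiableOn 𝕜 (fun x => A x * B x) s := by
  refine differentiableOn_pi.mpr fun i => differentiableOn_pi.mpr fun j => ?_
  simp only [mul_apply]
  have hA' := fun i j => differentiableOn_pi.mp (differentiableOn_pi.mp hA i) j
  have hB' := fun i j => differentiableOn_pi.mp (differentiableOn_pi.mp hB i) j
  fun_prop

variable [Fintype n] [DecidableEq n]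

theorem DifferentiableOn.matrix_det {M : E → Matrix n n 𝕜} (hM : DifferentiableOn 𝕜 M s) :
    DifferentiableOn 𝕜 (fun x => (M x).det) s := by
  have hM' := fun i j => differentiableOn_pi.mp (differentiableOn_pi.mp hM i) j
  simp only [det_apply]
  refine .fun_sum fun σ _ => DifferentiableOn.const_smul (fun x hx => ?_) _
  exact (HasFDerivWithinAt.finsetProd fun i _ =>
    (hM' (σ i) i x hx).hasFDerivWithinAt).differentiableWithinAt

theorem DifferentiableOn.matrix_updateRow {M : E → Matrix n n 𝕜} (hM : DifferentiableOn 𝕜 M s)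
    (j : n) (v : n → 𝕜) : DifferentiableOn 𝕜 (fun x => (M x).updateRow j v) s := by
  refine differentiableOn_pi.mpr fun i => ?_
  by_cases hi : i = j
  · subst hi; simp
  · simpa only [updateRow_ne hi] using differentiableOn_pi.mp hM i

theorem DifferentiableOn.matrix_adjugate {M : E → Matrix n n 𝕜} (hM : DifferentiableOn 𝕜 M s) :
    DifferentiableOn 𝕜 (fun x => (M x).adjugate) s :=
  differentiableOn_pi.mpr fun i => differentiableOn_pi.mpr fun j => by
    simpa only [adjugate_apply] using (hM.matrix_updateRow j (Pi.single i 1)).matrix_det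

theorem DifferentiableOn.matrix_inv {M : E → Matrix n n 𝕜} (hM : DifferentiableOn 𝕜 M s)
    (hdet : ∀ x ∈ s, (M x).det ≠ 0) : DifferentiableOn 𝕜 (fun x => (M x)⁻¹) s := by
  simp only [inv_def, Ring.inverse_eq_inv']
  exact (hM.matrix_det.inv hdet).smul hM.matrix_adjugate

end MatrixDifferentiable

section LinearAlgebra

variable {K m : Type*} [Field K] [Fintype m]

theorem exists_ne_zero_forall_vecMul_eq_zero {n : Type*} [Nonempty n] {s : Set (m → K)}
    (hs : Submodule.span K s ≠ ⊤) : ∃ C : Matrix m n K, C ≠ 0 ∧ ∀ a ∈ s, a ᵥ* C = 0 := by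
  classical
  obtain ⟨f, hf, hfs⟩ := Submodule.exists_dual_map_eq_bot_of_lt_top hs.lt_top inferInstance
  set v : m → K := fun i => f fun j => if i = j then 1 else 0
  have hfv : ∀ a, f a = a ⬝ᵥ v := f.pi_apply_eq_sum_univ
  refine ⟨replicateCol n v, fun h => hf (LinearMap.ext fun a => ?_), fun a ha => ?_⟩
  · rw [replicateCol_eq_zero] at h
    simp [hfv, h]
  · have hfa : f a ∈ (Submodule.span K s).map f :=
      Submodule.mem_map_of_mem (Submodule.subset_span ha)
    rw [hfs, Submodule.mem_bot] at hfa
    rw [mulVec_replicateCol_eq_const, ← hfv, hfa]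
    rfl

theorem exists_isUnit_forall_row_mem [DecidableEq m] {s : Set (m → K)}
    (hs : Submodule.span K s = ⊤) : ∃ R : Matrix m m K, IsUnit R ∧ ∀ i, R i ∈ s := by
  let b := Module.Basis.ofSpan hs.ge
  let b' := b.reindex (b.indexEquiv (Pi.basisFun K m))
  refine ⟨Matrix.of b', linearIndependent_rows_iff_isUnit.mp b'.linearIndependent, fun i => ?_⟩
  exact Module.Basis.ofSpan_subset hs.ge ⟨_, (b.reindex_apply _ i).symm⟩

end LinearAlgebra

theorem span_eq_top_of_unique_vecMul_solution {𝕜 m n : Type*} [NontriviallyNormedField 𝕜]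
    [Fintype m] [Nonempty n] {D : Set (Matrix m n 𝕜)} (hD : IsOpen D) {W₀ : Matrix m n 𝕜}
    (hW₀ : W₀ ∈ D) {s : Set (m → 𝕜)} (huniq : ∀ W ∈ D, (∀ a ∈ s, a ᵥ* W = a ᵥ* W₀) → W = W₀) :
    Submodule.span 𝕜 s = ⊤ := by
  by_contra hs
  obtain ⟨C, hC, hCs⟩ := exists_ne_zero_forall_vecMul_eq_zero (n := n) hs
  have hline : ∀ᶠ t : 𝕜 in 𝓝[≠] 0, W₀ + t • C ∈ D ∧ t ≠ 0 := by
    refine Eventually.and (nhdsWithin_le_nhds ?_) self_mem_nhdsWithin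
    exact (Continuous.tendsto (by fun_prop) 0).eventually (hD.mem_nhds (by simpa using hW₀))
  obtain ⟨t, htD, ht⟩ := hline.exists
  have hsol : W₀ + t • C = W₀ := huniq _ htD fun a ha => by
    rw [vecMul_add, vecMul_smul, hCs a ha, smul_zero, add_zero]
  exact smul_ne_zero ht hC (add_eq_left.mp hsol)

section FiberRows

variable {𝕜 k q p ι : Type*} [NontriviallyNormedField 𝕜] [Fintype q]

def fiberRows (f : (q → 𝕜) × (p → 𝕜) → ι → 𝕜) (A : k → q → 𝕜) (Z : Matrix q p 𝕜) :
    Matrix k ι 𝕜 :=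
  Matrix.of fun i => f (A i, A i ᵥ* Z)

theorem differentiable_vecMul_right [Fintype p] (a : q → 𝕜) :
    Differentiable 𝕜 fun Z : Matrix q p 𝕜 => a ᵥ* Z :=
  differentiable_pi.mpr fun j => by simp only [vecMul, dotProduct]; fun_prop

theorem isOpen_setOf_forall_fiber_mem [Fintype p] [Finite k] {U : Set ((q → 𝕜) × (p → 𝕜))}
    (hU : IsOpen U) (A : k → q → 𝕜) : IsOpen {Z : Matrix q p 𝕜 | ∀ i, (A i, A i ᵥ* Z) ∈ U} := by
  simp only [Set.ofPred_forall]
  exact isOpen_iInter_of_finite fun i =>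
    hU.preimage (continuous_const.prodMk (differentiable_vecMul_right (A i)).continuous)

theorem differentiableOn_fiberRows [Fintype p] [Fintype ι] {U : Set ((q → 𝕜) × (p → 𝕜))}
    {f : (q → 𝕜) × (p → 𝕜) → ι → 𝕜} (hf : DifferentiableOn 𝕜 f U) (A : k → q → 𝕜) :
    DifferentiableOn 𝕜 (fiberRows f A) {Z | ∀ i, (A i, A i ᵥ* Z) ∈ U} :=
  differentiableOn_pi.mpr fun i => hf.comp
    ((differentiable_const _).prodMk (differentiable_vecMul_right (A i))).differentiableOn
    fun _ hZ => hZ i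

theorem fiberRows_mul_eq [Fintype ι] {ι' : Type*} {U : Set ((q → 𝕜) × (p → 𝕜))}
    {g₁ : (q → 𝕜) × (p → 𝕜) → ι → 𝕜} {g₂ : (q → 𝕜) × (p → 𝕜) → ι' → 𝕜} {A : k → q → 𝕜}
    {Z : Matrix q p 𝕜} (hZ : ∀ i, (A i, A i ᵥ* Z) ∈ U) {W : Matrix ι ι' 𝕜}
    (hW : ∀ x ∈ U, x.1 ᵥ* Z = x.2 → g₁ x ᵥ* W = g₂ x) :
    fiberRows g₁ A Z * W = fiberRows g₂ A Z := by
  funext i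
  exact (mul_apply_eq_vecMul (fiberRows g₁ A Z) W i).trans (hW _ (hZ i) rfl)

end FiberRows

theorem stmt_14_general (q p q' p' : ℕ) (h0p' : 0 < p') (h2q' : 2 ≤ q')
    (U : Set ((Fin q → ℂ) × (Fin p → ℂ))) (hUopen : IsOpen U)
    (g1 : (Fin q → ℂ) × (Fin p → ℂ) → (Fin q' → ℂ))
    (g2 : (Fin q → ℂ) × (Fin p → ℂ) → (Fin p' → ℂ))
    (hg1 : DifferentiableOn ℂ g1 U) (hg2 : DifferentiableOn ℂ g2 U)
    (hfip : ∀ Z ∈ typeIDomain q p, (∃ x ∈ U, x.1 ᵥ* Z = x.2) →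
      ∃ W ∈ typeIDomain q' p', ∀ x ∈ U, x.1 ᵥ* Z = x.2 → (g1 x) ᵥ* W = g2 x)
    (Z0 : Matrix (Fin q) (Fin p) ℂ) (hZ0 : Z0 ∈ typeIDomain q p)
    (huniq : ∃! W, W ∈ typeIDomain q' p' ∧
      ∀ x ∈ U, x.1 ᵥ* Z0 = x.2 → (g1 x) ᵥ* W = g2 x) :
    ∃ V : Set (Matrix (Fin q) (Fin p) ℂ), IsOpen V ∧ Z0 ∈ V ∧ V ⊆ typeIDomain q p ∧
      ∃ F : Matrix (Fin q) (Fin p) ℂ → Matrix (Fin q') (Fin p') ℂ,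
        DifferentiableOn ℂ F V ∧
        ∀ Z ∈ V, F Z ∈ typeIDomain q' p' ∧
          (∀ x ∈ U, x.1 ᵥ* Z = x.2 → (g1 x) ᵥ* (F Z) = g2 x) ∧
          ∀ W ∈ typeIDomain q' p',
            (∀ x ∈ U, x.1 ᵥ* Z = x.2 → (g1 x) ᵥ* W = g2 x) → W = F Z := by
  obtain ⟨W₀, ⟨hW₀, hW₀eq⟩, hW₀uniq⟩ := huniq
  have : Nonempty (Fin p') := ⟨⟨0, h0p'⟩⟩
  have hspan : Submodule.span ℂ (g1 '' {x | x ∈ U ∧ x.1 ᵥ* Z0 = x.2}) = ⊤ :=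
    span_eq_top_of_unique_vecMul_solution (isOpen_typeIDomain q' p') hW₀ fun W hW hWeq =>
      hW₀uniq W ⟨hW, fun x hx hxZ => (hWeq _ ⟨x, ⟨hx, hxZ⟩, rfl⟩).trans (hW₀eq x hx hxZ)⟩
  obtain ⟨R, hR, hRrows⟩ := exists_isUnit_forall_row_mem hspan
  choose a haS hag using hRrows
  set A : Fin q' → Fin q → ℂ := fun i => (a i).1
  set O := {Z : Matrix (Fin q) (Fin p) ℂ | ∀ i, (A i, A i ᵥ* Z) ∈ U}
  set V := typeIDomain q p ∩ (O ∩ (fun Z => (fiberRows g1 A Z).det) ⁻¹' {0}ᶜ)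
  have hG₁ := differentiableOn_fiberRows hg1 A
  have hVopen : IsOpen V := (isOpen_typeIDomain q p).inter
    (hG₁.matrix_det.continuousOn.isOpen_inter_preimage (isOpen_setOf_forall_fiber_mem hUopen A)
      isOpen_compl_singleton)
  have hFdiff : DifferentiableOn ℂ (fun Z => (fiberRows g1 A Z)⁻¹ * fiberRows g2 A Z) V :=
    (((hG₁.mono fun _ h => h.2.1).matrix_inv fun _ h => h.2.2).matrix_mul
      ((differentiableOn_fiberRows hg2 A).mono fun _ h => h.2.1))
  refine ⟨V, hVopen, ⟨hZ0, ?_⟩, Set.inter_subset_left, _, hFdiff, ?_⟩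
  · have hfiber : ∀ i, (A i, A i ᵥ* Z0) = a i := fun i => Prod.ext rfl (haS i).2
    have hR' : fiberRows g1 A Z0 = R := funext fun i => (congrArg g1 (hfiber i)).trans (hag i)
    refine ⟨fun i => hfiber i ▸ (haS i).1, ?_⟩
    simpa [hR'] using (R.isUnit_iff_isUnit_det.mp hR).ne_zero
  · rintro Z ⟨hZ, hZU, hdet⟩
    have hsol : ∀ W, (∀ x ∈ U, x.1 ᵥ* Z = x.2 → g1 x ᵥ* W = g2 x) →
        W = (fiberRows g1 A Z)⁻¹ * fiberRows g2 A Z := fun W hW => by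
      rw [← fiberRows_mul_eq hZU hW,
        nonsing_inv_mul_cancel_left _ _ (isUnit_iff_ne_zero.mpr hdet)]
    obtain ⟨W, hW, hWeq⟩ := hfip Z hZ ⟨_, hZU ⟨0, by omega⟩, rfl⟩
    obtain rfl := hsol W hWeq
    exact ⟨hW, hWeq, fun W' _ hW' => hsol W' hW'⟩

/-- A holomorphic fibral-image-preserving map `g = (g₁,g₂)` defined on an open subset
`U` of the cone over `D_{q,p}`, with a point `Z₀` whose fibral image is sent into a
unique fibral image, admits a holomorphic local moduli map `F` near `Z₀`: `F Z` is the
unique `W ∈ D^I_{q',p'}` with `g₁(A,B)·W = g₂(A,B)` for all `(A,B) ∈ U` with `A·Z = B`. -/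
theorem stmt_14 (q p q' p' : ℕ) (h0p : 0 < p) (h0p' : 0 < p') (h2q : 2 ≤ q) (h2q' : 2 ≤ q')
    (U : Set ((Fin q → ℂ) × (Fin p → ℂ))) (hUopen : IsOpen U) (hUsub : U ⊆ genBallCone q p)
    (g1 : (Fin q → ℂ) × (Fin p → ℂ) → (Fin q' → ℂ))
    (g2 : (Fin q → ℂ) × (Fin p → ℂ) → (Fin p' → ℂ))
    (hg1 : DifferentiableOn ℂ g1 U) (hg2 : DifferentiableOn ℂ g2 U)
    (hgm : ∀ x ∈ U, (g1 x, g2 x) ∈ genBallCone q' p')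
    (hfip : ∀ Z ∈ typeIDomain q p, (∃ x ∈ U, x.1 ᵥ* Z = x.2) →
      ∃ W ∈ typeIDomain q' p', ∀ x ∈ U, x.1 ᵥ* Z = x.2 → (g1 x) ᵥ* W = g2 x)
    (Z0 : Matrix (Fin q) (Fin p) ℂ) (hZ0 : Z0 ∈ typeIDomain q p)
    (hZ0ne : ∃ x ∈ U, x.1 ᵥ* Z0 = x.2)
    (huniq : ∃! W, W ∈ typeIDomain q' p' ∧
      ∀ x ∈ U, x.1 ᵥ* Z0 = x.2 → (g1 x) ᵥ* W = g2 x) :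
    ∃ V : Set (Matrix (Fin q) (Fin p) ℂ), IsOpen V ∧ Z0 ∈ V ∧ V ⊆ typeIDomain q p ∧
      ∃ F : Matrix (Fin q) (Fin p) ℂ → Matrix (Fin q') (Fin p') ℂ,
        DifferentiableOn ℂ F V ∧
        ∀ Z ∈ V, F Z ∈ typeIDomain q' p' ∧
          (∀ x ∈ U, x.1 ᵥ* Z = x.2 → (g1 x) ᵥ* (F Z) = g2 x) ∧
          ∀ W ∈ typeIDomain q' p',
            (∀ x ∈ U, x.1 ᵥ* Z = x.2 → (g1 x) ᵥ* W = g2 x) → W = F Z :=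
  stmt_14_general q p q' p' h0p' h2q' U hUopen g1 g2 hg1 hg2 hfip Z0 hZ0 huniq
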